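/- If the capacitated graph G(H) associated with a 3-hypergraph H admits a sub-5-MCNZF, then H is 2-colorable. -/

import Mathlib

open Finset


open Finset

/-- A finite multigraph given with a reference orientation: each edge `e` goes
from `src e` to `tgt e`.  An orientation of the graph is a sign function
`σ : E → ℤˣ` telling, for each edge, whether it keeps (`1`) or reverses (`-1`)
its reference direction. -/
structure Multigraph where
  V : Type
  E : Type
  [fintV : Fintype V]
  [fintE : Fintype E]
  [decV : DecidableEq V]
  [decE : DecidableEq E]
  src : E → V
  tgt : E → V

attribute [instance] Multigraph.fintV Multigraph.fintE Multigraph.decV Multigraph.decE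

/-- `f` is a flow with respect to the reference orientation: at every vertex the
sum over outgoing edges equals the sum over incoming edges. -/
def Multigraph.IsFlow (G : Multigraph) {M : Type*} [AddCommMonoid M] (f : G.E → M) : Prop :=
  ∀ v : G.V,
    ∑ e ∈ Finset.univ.filter (fun e => G.src e = v), f e =
    ∑ e ∈ Finset.univ.filter (fun e => G.tgt e = v), f e

/-- `f` is a flow on the orientation `σ` of `G` (values of `f` are read in the
direction given by `σ`). -/
def Multigraph.IsFlowOn (G : Multigraph) {M : Type*} [AddCommGroup M]
    (σ : G.E → ℤˣ) (f : G.E → M) : Prop :=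
  G.IsFlow (fun e => ((σ e : ℤ) • f e))

/-- The open interval `(a,b)` of `ℝ/rℤ`: the points traversed strictly clockwise
from `a` to `b`, with the convention `(a,a) = ℝ/rℤ \ {a}`. -/
noncomputable def openArc (r a b : ℝ) : Set (AddCircle r) :=
  (fun t : ℝ => (t : AddCircle r)) '' Set.Ioo a (a + (r - Int.fract ((a - b) / r) * r))

/-- The closed interval `[a,b]` of `ℝ/rℤ`: the points traversed clockwise from
`a` to `b`, endpoints included, with the convention `[a,a] = {a}`. -/
noncomputable def closedArc (r a b : ℝ) : Set (AddCircle r) :=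
  (fun t : ℝ => (t : AddCircle r)) '' Set.Icc a (a + Int.fract ((b - a) / r) * r)

/-- `G` has a circular nowhere-zero `r`-flow: an orientation together with a
real-valued flow all of whose values lie in `[1, r-1]`. -/
def Multigraph.HasCNZF (G : Multigraph) (r : ℝ) : Prop :=
  ∃ (σ : G.E → ℤˣ) (f : G.E → ℝ), G.IsFlowOn σ f ∧ ∀ e, f e ∈ Set.Icc (1:ℝ) (r - 1)

/-- The circular flow number of `G`, as an extended real (`⊤` if `G` admits no
circular nowhere-zero `r`-flow for any `r`, e.g. if `G` has a bridge). -/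
noncomputable def circFlowNumber (G : Multigraph) : EReal :=
  sInf {x : EReal | ∃ r : ℝ, x = (r : EReal) ∧ G.HasCNZF r}

/-- The graph `G ∪ e₀` obtained from `G` by adding one extra edge `e₀ = none`
joining `u` to `v`. -/
def Multigraph.addEdge (G : Multigraph) (u v : G.V) : Multigraph where
  V := G.V
  E := Option G.E
  src := fun e => e.elim u G.src
  tgt := fun e => e.elim v G.tgt

/-- The capacity of the capacitated g-edge `(G, cap)` with terminals `u,v`:
all values `f e₀` of modular flows `f` on `G ∪ e₀` (over all orientations) whose
value on each edge `e` of `G` lies in the prescribed set `cap e`. -/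
def CPcap (r : ℝ) (G : Multigraph) (cap : G.E → Set (AddCircle r)) (u v : G.V) :
    Set (AddCircle r) :=
  {t | ∃ (σ : Option G.E → ℤˣ) (f : Option G.E → AddCircle r),
        (G.addEdge u v).IsFlowOn σ f ∧ (∀ e : G.E, f (some e) ∈ cap e) ∧ f none = t}

/-- The open `r`-capacity `CP_r(G_{u,v})` of the g-edge `G_{u,v}`. -/
noncomputable def CP (r : ℝ) (G : Multigraph) (u v : G.V) : Set (AddCircle r) :=
  CPcap r G (fun _ => openArc r 1 (r - 1)) u v

/-- A capacitated graph `(G, cap)` admits a flow respecting all capacities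
(for `cap e = (1,4) ⊆ ℝ/5ℤ` everywhere this is a sub-5-MCNZF). -/
def HasCapFlow (r : ℝ) (G : Multigraph) (cap : G.E → Set (AddCircle r)) : Prop :=
  ∃ (σ : G.E → ℤˣ) (f : G.E → AddCircle r), G.IsFlowOn σ f ∧ ∀ e, f e ∈ cap e

/-- Deletion of the edge `e₀`. -/
def Multigraph.deleteEdge (G : Multigraph) (e₀ : G.E) : Multigraph where
  V := G.V
  E := {e : G.E // e ≠ e₀}
  src := fun e => G.src e.1
  tgt := fun e => G.tgt e.1

/-- Degree of a vertex (loops count twice). -/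
def Multigraph.degree (G : Multigraph) (v : G.V) : ℕ :=
  (Finset.univ.filter (fun e => G.src e = v)).card +
  (Finset.univ.filter (fun e => G.tgt e = v)).card

/-- The tail of edge `e` in the orientation `σ`. -/
def Multigraph.osrc (G : Multigraph) (σ : G.E → ℤˣ) (e : G.E) : G.V :=
  if σ e = 1 then G.src e else G.tgt e

/-- The head of edge `e` in the orientation `σ`. -/
def Multigraph.otgt (G : Multigraph) (σ : G.E → ℤˣ) (e : G.E) : G.V :=
  if σ e = 1 then G.tgt e else G.src e

section GH

variable {n N : ℕ} (tri : Fin N → Fin 3 → Fin n)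

/-- The occurrences of the node `x`: pairs `(T, i)` such that `x` is the `i`-th
node of the triplet `T`. -/
def occSet (x : Fin n) : Type := {p : Fin N × Fin 3 // tri p.1 p.2 = x}

instance (x : Fin n) : Fintype (occSet tri x) := by unfold occSet; infer_instance
instance (x : Fin n) : DecidableEq (occSet tri x) := by unfold occSet; infer_instance

variable (enum : ∀ x : Fin n, occSet tri x ≃ Fin (Fintype.card (occSet tri x)))

/-- The cyclic successor of an occurrence of `x`, in the cyclic order given by
the enumeration `enum x`. -/
def nxtOcc (x : Fin n) (o : occSet tri x) : occSet tri x :=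
  (enum x).symm ⟨((enum x o : Fin _).1 + 1) % Fintype.card (occSet tri x),
    Nat.mod_lt _ (Fintype.card_pos_iff.mpr ⟨o⟩)⟩

/-- The cyclic order `(T₁⁺, T₂⁺, T₃⁺, T₃⁻, T₂⁻, T₁⁻)` of a triplet-cycle
(`true` = positive, `false` = negative). -/
def cyc6 : Fin 6 → Fin 3 × Bool :=
  ![(0, true), (1, true), (2, true), (2, false), (1, false), (0, false)]

/-- The capacitated graph `G(H)` associated with the 3-hypergraph `H` given by
`tri` (with a chosen cyclic enumeration `enum x` of the occurrences of each node
`x`).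

Vertices: `Sum.inl (o, s)` is the positive (`s = true`) or negative
(`s = false`) terminal of the node-cycle `C(tri o.1 o.2)` associated with the
occurrence `o`; `Sum.inr ((T,i), s)` is the vertex `Tᵢ⁺` (resp. `Tᵢ⁻`) of the
triplet-cycle `C(T)`.

Edges: `Sum.inl (o, true)` joins the two terminals of the occurrence `o`, and
`Sum.inl (o, false)` joins the negative terminal of `o` to the positive
terminal of the next occurrence of the same node, so that the node-cycle
`C(x)` passes through its positive and negative terminals alternately, and has
length twice the number of triplets containing `x`; `Sum.inr (Sum.inl (T,j))`
is the `j`-th edge of the triplet-cycle `C(T)`, in the cyclic order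
`(T₁⁺, T₂⁺, T₃⁺, T₃⁻, T₂⁻, T₁⁻)`; `Sum.inr (Sum.inr (o, s))` is the connector
joining the positive (resp. negative) terminal of the occurrence `o = (T,i)`
to `Tᵢ⁺` (resp. `Tᵢ⁻`). -/
def GH : Multigraph where
  V := ((Fin N × Fin 3) × Bool) ⊕ ((Fin N × Fin 3) × Bool)
  E := ((Fin N × Fin 3) × Bool) ⊕ ((Fin N × Fin 6) ⊕ ((Fin N × Fin 3) × Bool))
  src := fun e =>
    match e with
    | Sum.inl (o, true) => Sum.inl (o, true)
    | Sum.inl (o, false) => Sum.inl (o, false)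
    | Sum.inr (Sum.inl (T, j)) => Sum.inr ((T, (cyc6 j).1), (cyc6 j).2)
    | Sum.inr (Sum.inr (o, s)) => Sum.inl (o, s)
  tgt := fun e =>
    match e with
    | Sum.inl (o, true) => Sum.inl (o, false)
    | Sum.inl (o, false) => Sum.inl ((nxtOcc tri enum (tri o.1 o.2) ⟨o, rfl⟩).1, true)
    | Sum.inr (Sum.inl (T, j)) => Sum.inr ((T, (cyc6 (j + 1)).1), (cyc6 (j + 1)).2)
    | Sum.inr (Sum.inr (o, s)) => Sum.inr (o, s)

/-- The capacities of `G(H)`: node-cycle edges and connectors get capacity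
`(1,2) ∪ (3,4)`, triplet-cycle edges get capacity `(1,4)`. -/
noncomputable def GHcap : (GH tri enum).E → Set (AddCircle (5:ℝ)) := fun e =>
  match e with
  | Sum.inl _ => openArc 5 1 2 ∪ openArc 5 3 4
  | Sum.inr (Sum.inl _) => openArc 5 1 4
  | Sum.inr (Sum.inr _) => openArc 5 1 2 ∪ openArc 5 3 4

/-- The 3-hypergraph given by `tri` is 2-colorable: the nodes can be 2-colored
so that no triplet is monochromatic. -/
def TwoColorable : Prop :=
  ∃ c : Fin n → Bool, ∀ T : Fin N,
    (∃ i : Fin 3, c (tri T i) = true) ∧ (∃ i : Fin 3, c (tri T i) = false)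

end GH

/-!
Every capacity of `G(H)` is symmetric under `x ↦ -x`, so the orientation can be absorbed into
the flow values. Call a value of `(1,2) ∪ (3,4)` low if it lies in `(1,2)`. Conservation at a
terminal of a node-cycle, `a + b = c` with `a, b, c ∈ (1,2) ∪ (3,4)`, forces `a` and `b` to be
of the same type and `c` to be of the other one. Hence the node-cycle edge leaving a terminal
and its connector have the same type, and the edges of `C(x)` alternate, so the edges leaving
the positive terminals of `C(x)` all have one type: the colour of `x`. If a triplet `T` were
monochromatic, the three connectors entering `T₁⁺, T₂⁺, T₃⁺` (or `T₃⁻, T₂⁻, T₁⁻`) would all be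
low; walking along `C(T)` they add more than `3` to a value of `(1,4)` without ever leaving
`(1,4)`, which is impossible.
-/

section CircleArithmetic

lemma openArc_eq_image {r a b : ℝ} (hr : 0 < r) (hab : a < b) (hba : b < a + r) :
    openArc r a b = ((↑) : ℝ → AddCircle r) '' Set.Ioo a b := by
  have hfract : Int.fract ((a - b) / r) = (a - b) / r + 1 := by
    rw [Int.fract_eq_iff]
    refine ⟨?_, ?_, -1, by push_cast; ring⟩
    · rw [← neg_le_iff_add_nonneg', neg_le, le_div_iff₀ hr]; linarith
    · rw [add_lt_iff_neg_right, div_neg_iff]; right; exact ⟨by linarith, hr⟩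
  rw [openArc, hfract]
  congr 2
  field_simp
  ring

lemma openArc_one_two : openArc 5 1 2 = ((↑) : ℝ → AddCircle (5 : ℝ)) '' Set.Ioo 1 2 :=
  openArc_eq_image (by norm_num) (by norm_num) (by norm_num)

lemma openArc_three_four : openArc 5 3 4 = ((↑) : ℝ → AddCircle (5 : ℝ)) '' Set.Ioo 3 4 :=
  openArc_eq_image (by norm_num) (by norm_num) (by norm_num)

lemma openArc_one_four : openArc 5 1 4 = ((↑) : ℝ → AddCircle (5 : ℝ)) '' Set.Ioo 1 4 :=
  openArc_eq_image (by norm_num) (by norm_num) (by norm_num)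

lemma neg_coe_mem_image_Ioo {r a b x : ℝ} (hx : x ∈ Set.Ioo a b) :
    -(x : AddCircle r) ∈ ((↑) : ℝ → AddCircle r) '' Set.Ioo (r - b) (r - a) :=
  ⟨r - x, ⟨by linarith [hx.2], by linarith [hx.1]⟩, by
    rw [AddCircle.coe_sub, AddCircle.coe_period, zero_sub]⟩

lemma neg_mem_openArc_one_four {x : AddCircle (5 : ℝ)} (hx : x ∈ openArc 5 1 4) :
    -x ∈ openArc 5 1 4 := by
  rw [openArc_one_four] at hx ⊢
  obtain ⟨u, hu, rfl⟩ := hx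
  have h := neg_coe_mem_image_Ioo (r := 5) hu
  norm_num at h
  exact h

lemma neg_mem_lowHigh {x : AddCircle (5 : ℝ)} (hx : x ∈ openArc 5 1 2 ∪ openArc 5 3 4) :
    -x ∈ openArc 5 1 2 ∪ openArc 5 3 4 := by
  rw [openArc_one_two, openArc_three_four] at hx ⊢
  rcases hx with ⟨u, hu, rfl⟩ | ⟨u, hu, rfl⟩
  · have h := neg_coe_mem_image_Ioo (r := 5) hu
    norm_num at h
    exact Or.inr h
  · have h := neg_coe_mem_image_Ioo (r := 5) hu
    norm_num at h
    exact Or.inl h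

lemma coe_eq_coe_five {x y : ℝ} (hx : x ∈ Set.Ico 1 6) (hy : y ∈ Set.Ico 1 6)
    (h : (x : AddCircle (5 : ℝ)) = y) : x = y := by
  have : Fact ((0 : ℝ) < 5) := ⟨by norm_num⟩
  exact (AddCircle.coe_eq_coe_iff_of_mem_Ico (a := 1) (by norm_num; exact hx)
    (by norm_num; exact hy)).mp h

lemma exists_coe_eq_of_mem_lowHigh {x : AddCircle (5 : ℝ)}
    (hx : x ∈ openArc 5 1 2 ∪ openArc 5 3 4) :
    ∃ u : ℝ, (u : AddCircle (5 : ℝ)) = x ∧ u ∈ Set.Ioo 1 2 ∪ Set.Ioo 3 4 ∧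
      (x ∈ openArc 5 1 2 ↔ u < 2) := by
  rw [openArc_one_two, openArc_three_four] at hx
  rw [openArc_one_two]
  rcases hx with ⟨u, hu, rfl⟩ | ⟨u, hu, rfl⟩
  · exact ⟨u, rfl, Or.inl hu, iff_of_true ⟨u, hu, rfl⟩ hu.2⟩
  · refine ⟨u, rfl, Or.inr hu, ?_⟩
    simp only [Set.mem_image, Set.mem_Ioo]
    refine ⟨fun ⟨v, hv, hvu⟩ => ?_, fun h => by linarith [hu.1]⟩
    have := coe_eq_coe_five ⟨by linarith, by linarith⟩ ⟨by linarith [hu.1], by linarith [hu.2]⟩ hvu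
    linarith

lemma lowHigh_add_of_coe_eq {a b c : ℝ} (ha : a ∈ Set.Ioo 1 2 ∪ Set.Ioo 3 4)
    (hb : b ∈ Set.Ioo 1 2 ∪ Set.Ioo 3 4) (hc : c ∈ Set.Ioo 1 2 ∪ Set.Ioo 3 4)
    (h : (a : AddCircle (5 : ℝ)) + b = c) :
    (a < 2 ↔ b < 2) ∧ (c < 2 ↔ ¬ a < 2) := by
  rw [← AddCircle.coe_add] at h
  have hS : ∀ x ∈ Set.Ioo (1 : ℝ) 2 ∪ Set.Ioo 3 4, 1 < x ∧ x < 4 := by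
    rintro x (hx | hx) <;> exact ⟨by linarith [hx.1], by linarith [hx.2]⟩
  obtain ⟨ha1, ha4⟩ := hS a ha
  obtain ⟨hb1, hb4⟩ := hS b hb
  obtain ⟨hc1, hc4⟩ := hS c hc
  have hsum : c = a + b ∨ c = a + b - 5 := by
    by_cases hlt : a + b < 6
    · exact Or.inl (coe_eq_coe_five ⟨by linarith, hlt⟩ ⟨by linarith, by linarith⟩ h).symm
    · refine Or.inr (coe_eq_coe_five ⟨by linarith, by linarith⟩ ⟨by linarith, by linarith⟩ ?_).symm
      rw [AddCircle.coe_sub, AddCircle.coe_period, sub_zero, h]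
  rcases ha with ha | ha <;> rcases hb with hb | hb <;> rcases hc with hc | hc <;>
    rcases hsum with hsum | hsum <;> simp only [Set.mem_Ioo] at ha hb hc <;>
    constructor <;> constructor <;> intro <;> linarith

lemma openArc_one_two_of_add_eq {a b c : AddCircle (5 : ℝ)}
    (ha : a ∈ openArc 5 1 2 ∪ openArc 5 3 4) (hb : b ∈ openArc 5 1 2 ∪ openArc 5 3 4)
    (hc : c ∈ openArc 5 1 2 ∪ openArc 5 3 4) (h : a + b = c) :
    (a ∈ openArc 5 1 2 ↔ b ∈ openArc 5 1 2) ∧ (c ∈ openArc 5 1 2 ↔ a ∉ openArc 5 1 2) := by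
  obtain ⟨a', rfl, ha', hal⟩ := exists_coe_eq_of_mem_lowHigh ha
  obtain ⟨b', rfl, hb', hbl⟩ := exists_coe_eq_of_mem_lowHigh hb
  obtain ⟨c', rfl, hc', hcl⟩ := exists_coe_eq_of_mem_lowHigh hc
  rw [hal, hbl, hcl]
  exact lowHigh_add_of_coe_eq ha' hb' hc' h

lemma add_lt_four_of_coe_mem {t u : ℝ} (ht : t ∈ Set.Ioo 1 4) (hu : u ∈ Set.Ioo 1 2)
    (h : ((t + u : ℝ) : AddCircle (5 : ℝ)) ∈ openArc 5 1 4) : t + u < 4 := by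
  rw [openArc_one_four] at h
  obtain ⟨s, hs, hst⟩ := h
  have := coe_eq_coe_five ⟨by linarith [hs.1], by linarith [hs.2]⟩
    ⟨by linarith [ht.1, hu.1], by linarith [ht.2, hu.2]⟩ hst
  linarith [hs.2]

lemma not_mem_openArc_one_four_of_three_steps {t₀ t₁ t₂ t₃ c₁ c₂ c₃ : AddCircle (5 : ℝ)}
    (ht₀ : t₀ ∈ openArc 5 1 4) (hc₁ : c₁ ∈ openArc 5 1 2) (hc₂ : c₂ ∈ openArc 5 1 2)
    (hc₃ : c₃ ∈ openArc 5 1 2) (h₁ : t₁ = t₀ + c₁) (h₂ : t₂ = t₁ + c₂) (h₃ : t₃ = t₂ + c₃)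
    (ht₁ : t₁ ∈ openArc 5 1 4) (ht₂ : t₂ ∈ openArc 5 1 4) : t₃ ∉ openArc 5 1 4 := by
  intro ht₃
  rw [openArc_one_four] at ht₀
  rw [openArc_one_two] at hc₁ hc₂ hc₃
  obtain ⟨s, hs, rfl⟩ := ht₀
  obtain ⟨u₁, hu₁, rfl⟩ := hc₁
  obtain ⟨u₂, hu₂, rfl⟩ := hc₂
  obtain ⟨u₃, hu₃, rfl⟩ := hc₃
  subst h₁ h₂ h₃
  simp only [← AddCircle.coe_add] at ht₁ ht₂ ht₃
  have k₁ := add_lt_four_of_coe_mem hs hu₁ ht₁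
  have k₂ := add_lt_four_of_coe_mem ⟨by linarith [hs.1, hu₁.1], k₁⟩ hu₂ ht₂
  have k₃ := add_lt_four_of_coe_mem ⟨by linarith [hs.1, hu₁.1, hu₂.1], k₂⟩ hu₃ ht₃
  linarith [hs.1, hu₁.1, hu₂.1, hu₃.1]

end CircleArithmetic

lemma units_zsmul_mem {G : Type*} [AddGroup G] {A : Set G} (hA : ∀ x ∈ A, -x ∈ A) (u : ℤˣ)
    {x : G} (hx : x ∈ A) : (u : ℤ) • x ∈ A := by
  rcases Int.units_eq_one_or u with rfl | rfl
  · simpa using hx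
  · simpa using hA x hx

section Flow

variable {G : Multigraph} {M : Type*} [AddCommMonoid M] {f : G.E → M} {v : G.V} {a b c : G.E}

lemma Multigraph.IsFlow.add_eq (hf : G.IsFlow f) (hab : a ≠ b)
    (hout : ∀ e, G.src e = v ↔ e = a ∨ e = b) (hin : ∀ e, G.tgt e = v ↔ e = c) :
    f a + f b = f c := by
  have h := hf v
  rwa [show univ.filter (fun e => G.src e = v) = {a, b} by ext e; simp [hout],
    show univ.filter (fun e => G.tgt e = v) = {c} by ext e; simp [hin],
    Finset.sum_pair hab, Finset.sum_singleton] at h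

lemma Multigraph.IsFlow.eq_add (hf : G.IsFlow f) (hab : a ≠ b)
    (hout : ∀ e, G.src e = v ↔ e = c) (hin : ∀ e, G.tgt e = v ↔ e = a ∨ e = b) :
    f c = f a + f b := by
  have h := hf v
  rwa [show univ.filter (fun e => G.src e = v) = {c} by ext e; simp [hout],
    show univ.filter (fun e => G.tgt e = v) = {a, b} by ext e; simp [hin],
    Finset.sum_pair hab, Finset.sum_singleton] at h

end Flow

section Occurrences

variable {n N : ℕ} (tri : Fin N → Fin 3 → Fin n)
variable (enum : ∀ x : Fin n, occSet tri x ≃ Fin (Fintype.card (occSet tri x)))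

def nextOcc (o : Fin N × Fin 3) : Fin N × Fin 3 :=
  (nxtOcc tri enum (tri o.1 o.2) ⟨o, rfl⟩).1

lemma nextOcc_val {x : Fin n} (q : occSet tri x) :
    nextOcc tri enum q.1 = (nxtOcc tri enum x q).1 := by
  obtain ⟨o, rfl⟩ := q
  rfl

lemma nxtOcc_injective (x : Fin n) : Function.Injective (nxtOcc tri enum x) := by
  intro q q' h
  have hval := congrArg Fin.val ((enum x).symm.injective h)
  simp only at hval
  have hmod : (enum x q : ℕ) % _ = (enum x q' : ℕ) % _ := Nat.ModEq.add_right_cancel' 1 hval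
  rw [Nat.mod_eq_of_lt (enum x q).2, Nat.mod_eq_of_lt (enum x q').2] at hmod
  exact (enum x).injective (Fin.ext hmod)

lemma nextOcc_injective : Function.Injective (nextOcc tri enum) := by
  intro o o' h
  have hx : tri o'.1 o'.2 = tri o.1 o.2 := by
    rw [← (nxtOcc tri enum _ ⟨o', rfl⟩).2, ← (nxtOcc tri enum _ ⟨o, rfl⟩).2]
    exact congrArg (fun p : Fin N × Fin 3 => tri p.1 p.2) h.symm
  have := nxtOcc_injective tri enum _ (Subtype.ext (h.trans (nextOcc_val tri enum ⟨o', hx⟩)) :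
    nxtOcc tri enum _ ⟨o, rfl⟩ = nxtOcc tri enum _ ⟨o', hx⟩)
  exact congrArg Subtype.val this

lemma nextOcc_surjective : Function.Surjective (nextOcc tri enum) :=
  Finite.surjective_of_injective (nextOcc_injective tri enum)

lemma nxtOcc_symm_apply {x : Fin n} {j : ℕ} (hj : j + 1 < Fintype.card (occSet tri x)) :
    nxtOcc tri enum x ((enum x).symm ⟨j, by omega⟩) = (enum x).symm ⟨j + 1, hj⟩ := by
  simp only [nxtOcc, Equiv.apply_symm_apply, Nat.mod_eq_of_lt hj]

lemma iff_of_forall_nextOcc_iff (P : Fin N × Fin 3 → Prop)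
    (hP : ∀ o, P (nextOcc tri enum o) ↔ P o) {o o' : Fin N × Fin 3}
    (h : tri o.1 o.2 = tri o'.1 o'.2) : P o ↔ P o' := by
  set x := tri o'.1 o'.2
  have hm : 0 < Fintype.card (occSet tri x) := Fintype.card_pos_iff.mpr ⟨⟨o', rfl⟩⟩
  have hfirst : ∀ j (hj : j < Fintype.card (occSet tri x)),
      P ((enum x).symm ⟨j, hj⟩).1 ↔ P ((enum x).symm ⟨0, hm⟩).1 := by
    intro j
    induction j with
    | zero => exact fun _ => Iff.rfl
    | succ j ih =>
      intro hj
      rw [← nxtOcc_symm_apply tri enum hj, ← nextOcc_val]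
      exact (hP _).trans (ih (by omega))
  have hall : ∀ r : occSet tri x, P r.1 ↔ P ((enum x).symm ⟨0, hm⟩).1 := fun r => by
    simpa using hfirst _ (enum x r).2
  exact (hall ⟨o, h⟩).trans (hall ⟨o', rfl⟩).symm

end Occurrences

section FlowEquations

variable {n N : ℕ} {tri : Fin N → Fin 3 → Fin n}
variable {enum : ∀ x : Fin n, occSet tri x ≃ Fin (Fintype.card (occSet tri x))}
variable {M : Type*} [AddCommMonoid M] {g : (GH tri enum).E → M}

lemma cyc6_injective : Function.Injective cyc6 := by decide

lemma GH.flow_at_negTerminal (hg : (GH tri enum).IsFlow g) (o : Fin N × Fin 3) :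
    g (.inl (o, false)) + g (.inr (.inr (o, false))) = g (.inl (o, true)) := by
  refine hg.add_eq (v := (Sum.inl (o, false) : (GH tri enum).V)) Sum.inl_ne_inr
    (fun e => ?_) (fun e => ?_) <;>
    rcases e with ⟨o', _ | _⟩ | ⟨T, j⟩ | ⟨o', s⟩ <;> simp [GH]

lemma GH.flow_at_posTerminal (hg : (GH tri enum).IsFlow g) (o : Fin N × Fin 3) :
    g (.inl (nextOcc tri enum o, true)) + g (.inr (.inr (nextOcc tri enum o, true))) =
      g (.inl (o, false)) := by
  refine hg.add_eq (v := (Sum.inl (nextOcc tri enum o, true) : (GH tri enum).V))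
    Sum.inl_ne_inr (fun e => ?_) (fun e => ?_) <;>
    rcases e with ⟨o', _ | _⟩ | ⟨T, j⟩ | ⟨o', s⟩ <;> simp [GH]
  exact (nextOcc_injective tri enum).eq_iff

lemma GH.flow_at_tripletVertex (hg : (GH tri enum).IsFlow g) (T : Fin N) (k : Fin 6) :
    g (.inr (.inl (T, k))) =
      g (.inr (.inl (T, k - 1))) + g (.inr (.inr ((T, (cyc6 k).1), (cyc6 k).2))) := by
  refine hg.eq_add (v := (Sum.inr ((T, (cyc6 k).1), (cyc6 k).2) : (GH tri enum).V))
    (fun h => Sum.inl_ne_inr (Sum.inr.inj h)) (fun e => ?_) (fun e => ?_) <;>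
    rcases e with ⟨o', _ | _⟩ | ⟨T', j⟩ | ⟨o', s⟩ <;> simp [GH]
  · rw [and_assoc, ← Prod.ext_iff, cyc6_injective.eq_iff]
  · rw [and_assoc, ← Prod.ext_iff, cyc6_injective.eq_iff, eq_sub_iff_add_eq]

end FlowEquations

section Coloring

variable {n N : ℕ} {tri : Fin N → Fin 3 → Fin n}
variable {enum : ∀ x : Fin n, occSet tri x ≃ Fin (Fintype.card (occSet tri x))}
variable {g : (GH tri enum).E → AddCircle (5 : ℝ)}

lemma neg_mem_GHcap (e : (GH tri enum).E) : ∀ x ∈ GHcap tri enum e, -x ∈ GHcap tri enum e := by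
  rcases e with _ | _ | _
  exacts [fun _ => neg_mem_lowHigh, fun _ => neg_mem_openArc_one_four, fun _ => neg_mem_lowHigh]

lemma GH.low_at_negTerminal (hg : (GH tri enum).IsFlow g) (hcap : ∀ e, g e ∈ GHcap tri enum e)
    (o : Fin N × Fin 3) :
    (g (.inl (o, false)) ∈ openArc 5 1 2 ↔ g (.inr (.inr (o, false))) ∈ openArc 5 1 2) ∧
      (g (.inl (o, true)) ∈ openArc 5 1 2 ↔ g (.inl (o, false)) ∉ openArc 5 1 2) :=
  openArc_one_two_of_add_eq (hcap (.inl (o, false))) (hcap (.inr (.inr (o, false))))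
    (hcap (.inl (o, true))) (GH.flow_at_negTerminal hg o)

lemma GH.low_at_posTerminal (hg : (GH tri enum).IsFlow g) (hcap : ∀ e, g e ∈ GHcap tri enum e)
    (o : Fin N × Fin 3) :
    (g (.inl (nextOcc tri enum o, true)) ∈ openArc 5 1 2 ↔
        g (.inr (.inr (nextOcc tri enum o, true))) ∈ openArc 5 1 2) ∧
      (g (.inl (o, false)) ∈ openArc 5 1 2 ↔
        g (.inl (nextOcc tri enum o, true)) ∉ openArc 5 1 2) :=
  openArc_one_two_of_add_eq (hcap (.inl (nextOcc tri enum o, true)))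
    (hcap (.inr (.inr (nextOcc tri enum o, true)))) (hcap (.inl (o, false)))
    (GH.flow_at_posTerminal hg o)

lemma GH.lowConn_iff_lowNode (hg : (GH tri enum).IsFlow g) (hcap : ∀ e, g e ∈ GHcap tri enum e)
    (o : Fin N × Fin 3) (s : Bool) :
    g (.inr (.inr (o, s))) ∈ openArc 5 1 2 ↔ g (.inl (o, s)) ∈ openArc 5 1 2 := by
  cases s
  · exact (GH.low_at_negTerminal hg hcap o).1.symm
  · obtain ⟨o', rfl⟩ := nextOcc_surjective tri enum o
    exact (GH.low_at_posTerminal hg hcap o').1.symm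

lemma GH.lowPos_iff_of_tri_eq (hg : (GH tri enum).IsFlow g)
    (hcap : ∀ e, g e ∈ GHcap tri enum e) {o o' : Fin N × Fin 3}
    (h : tri o.1 o.2 = tri o'.1 o'.2) :
    g (.inl (o, true)) ∈ openArc 5 1 2 ↔ g (.inl (o', true)) ∈ openArc 5 1 2 := by
  refine iff_of_forall_nextOcc_iff tri enum (fun o => g (.inl (o, true)) ∈ openArc 5 1 2)
    (fun o => ?_) h
  have hpos := (GH.low_at_posTerminal hg hcap o).2
  have hneg := (GH.low_at_negTerminal hg hcap o).2
  tauto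

lemma GH.exists_not_lowConn (hg : (GH tri enum).IsFlow g)
    (hcap : ∀ e, g e ∈ GHcap tri enum e) (T : Fin N) (s : Bool) :
    ∃ i : Fin 3, g (.inr (.inr ((T, i), s))) ∉ openArc 5 1 2 := by
  by_contra! h
  cases s
  · exact not_mem_openArc_one_four_of_three_steps (hcap (.inr (.inl (T, 2)))) (h 2) (h 1) (h 0)
      (GH.flow_at_tripletVertex hg T 3) (GH.flow_at_tripletVertex hg T 4)
      (GH.flow_at_tripletVertex hg T 5) (hcap (.inr (.inl (T, 3))))
      (hcap (.inr (.inl (T, 4)))) (hcap (.inr (.inl (T, 5))))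
  · exact not_mem_openArc_one_four_of_three_steps (hcap (.inr (.inl (T, 5)))) (h 0) (h 1) (h 2)
      (GH.flow_at_tripletVertex hg T 0) (GH.flow_at_tripletVertex hg T 1)
      (GH.flow_at_tripletVertex hg T 2) (hcap (.inr (.inl (T, 0))))
      (hcap (.inr (.inl (T, 1)))) (hcap (.inr (.inl (T, 2))))

theorem GH.twoColorable_of_isFlow (hg : (GH tri enum).IsFlow g)
    (hcap : ∀ e, g e ∈ GHcap tri enum e) : TwoColorable tri := by
  classical
  refine ⟨fun x => decide (∃ o : Fin N × Fin 3, tri o.1 o.2 = x ∧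
    g (.inl (o, true)) ∈ openArc 5 1 2), fun T => ?_⟩
  have hcolor : ∀ i : Fin 3, (∃ o : Fin N × Fin 3, tri o.1 o.2 = tri T i ∧
      g (.inl (o, true)) ∈ openArc 5 1 2) ↔ g (.inl ((T, i), true)) ∈ openArc 5 1 2 :=
    fun i => ⟨fun ⟨_, ho, h⟩ => (GH.lowPos_iff_of_tri_eq hg hcap ho).1 h,
      fun h => ⟨(T, i), rfl, h⟩⟩
  obtain ⟨i, hi⟩ := GH.exists_not_lowConn hg hcap T false
  obtain ⟨j, hj⟩ := GH.exists_not_lowConn hg hcap T true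
  rw [GH.lowConn_iff_lowNode hg hcap] at hi hj
  refine ⟨⟨i, ?_⟩, ⟨j, ?_⟩⟩
  · simpa [hcolor] using (GH.low_at_negTerminal hg hcap _).2.2 hi
  · simpa [hcolor] using hj

end Coloring

theorem flow_implies_twoColorable_general {n N : ℕ} (tri : Fin N → Fin 3 → Fin n)
    (enum : ∀ x : Fin n, occSet tri x ≃ Fin (Fintype.card (occSet tri x))) :
    HasCapFlow 5 (GH tri enum) (GHcap tri enum) → TwoColorable tri := by
  rintro ⟨σ, f, hflow, hcap⟩
  exact GH.twoColorable_of_isFlow hflow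
    fun e => units_zsmul_mem (neg_mem_GHcap e) (σ e) (hcap e)

/-- If the capacitated graph `G(H)` associated with a
3-hypergraph `H` (with node set `Fin n`, triplets indexed by `Fin N` via
`tri`, each triplet consisting of three distinct nodes) admits a sub-5-MCNZF,
then `H` is 2-colorable. -/
theorem flow_implies_twoColorable {n N : ℕ} (tri : Fin N → Fin 3 → Fin n)
    (htri : ∀ T : Fin N, Function.Injective (tri T))
    (enum : ∀ x : Fin n, occSet tri x ≃ Fin (Fintype.card (occSet tri x))) :
    HasCapFlow 5 (GH tri enum) (GHcap tri enum) → TwoColorable tri :=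
  flow_implies_twoColorable_general tri enum
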